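/- Let (y, f) be a feasible solution to the relaxed origin-based model, fix an origin s and a demand k ∈ D_s with bandwidth d_k > 0. Then for every node i reachable backwards from t_k through positive-flow edges of f(s,·) with i ≠ s, exactly one incoming edge (h,i) has y(s,(h,i)) = 1; consequently, tracing back from t_k along y-selected incoming edges yields a well-defined directed path from s to t_k. -/

import Mathlib

/-!
Positive flow on an edge forces `y = 1` on it (`f ≤ y · ∑ d`), and a node `i ≠ s` reached
backwards from `t₀` has positive inflow: either it is `t₀` itself, with positive demand, or it
sends positive flow forwards, which conservation must balance. With `∑ y ≤ 1` into `i` this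
leaves exactly one selected in-edge. For the path, the set `A` of nodes reached backwards
from `t₀` receives no positive flow from outside, so its net inflow is at most its outflow;
if `s ∉ A` conservation makes that net inflow the positive total demand in `A`. Hence `s ∈ A`,
and the backward positive-flow walk from `t₀` to `s`, reversed, runs along selected edges.
-/

open Finset

section Flow

variable {V : Type} [DecidableEq V] {L : Finset (V × V)} {f : V × V → ℝ}

def inflow (L : Finset (V × V)) (f : V × V → ℝ) (i : V) : ℝ := ∑ e ∈ L with e.2 = i, f e

def outflow (L : Finset (V × V)) (f : V × V → ℝ) (i : V) : ℝ := ∑ e ∈ L with e.1 = i, f e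

def PosFlowPred (L : Finset (V × V)) (f : V × V → ℝ) (a b : V) : Prop :=
  (b, a) ∈ L ∧ 0 < f (b, a)

theorem sum_inflow_le_sum_outflow (hf : ∀ e, 0 ≤ f e) {A : Finset V}
    (hA : ∀ e ∈ L, e.2 ∈ A → 0 < f e → e.1 ∈ A) :
    ∑ a ∈ A, inflow L f a ≤ ∑ a ∈ A, outflow L f a := by
  simp only [inflow, outflow]
  rw [sum_fiberwise_eq_sum_filter, sum_fiberwise_eq_sum_filter, sum_filter, sum_filter]
  refine sum_le_sum fun e he => ?_
  by_cases h1 : e.1 ∈ A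
  · rw [if_pos h1]; split_ifs; exacts [le_rfl, hf e]
  · have hzero : e.2 ∈ A → f e = 0 := fun h2 =>
      by_contra fun h0 => h1 (hA e he h2 ((hf e).lt_of_ne' h0))
    rw [if_neg h1]; split_ifs with h2; exacts [(hzero h2).le, le_rfl]

theorem outflow_pos_of_posFlowPred {i c : V} (h : PosFlowPred L f c i) (hf : ∀ e, 0 ≤ f e) :
    0 < outflow L f i :=
  h.2.trans_le <| single_le_sum (fun e _ => hf e) (mem_filter.2 ⟨h.1, rfl⟩)

variable {b : V → ℝ} (hf : ∀ e, 0 ≤ f e) (hcons : ∀ i, inflow L f i - outflow L f i = b i)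
include hf hcons

theorem inflow_pos_of_reflTransGen {t i : V} (hbt : 0 < b t) (hbi : 0 ≤ b i)
    (hti : Relation.ReflTransGen (PosFlowPred L f) t i) : 0 < inflow L f i := by
  have hi := hcons i
  rcases hti.cases_tail with rfl | ⟨c, -, hci⟩
  · linarith [show 0 ≤ outflow L f i from sum_nonneg fun e _ => hf e]
  · linarith [outflow_pos_of_posFlowPred hci hf]

theorem exists_reflTransGen_neg_of_pos {t : V} (hbt : 0 < b t) :
    ∃ i, Relation.ReflTransGen (PosFlowPred L f) t i ∧ b i < 0 := by
  by_contra! hsrc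
  classical
  let A := (insert t (L.image Prod.fst)).filter (Relation.ReflTransGen (PosFlowPred L f) t)
  have htA : t ∈ A := mem_filter.2 ⟨mem_insert_self _ _, .refl⟩
  have hA : ∀ e ∈ L, e.2 ∈ A → 0 < f e → e.1 ∈ A := fun e he h2 hpos =>
    mem_filter.2 ⟨mem_insert_of_mem (mem_image_of_mem _ he), (mem_filter.1 h2).2.tail ⟨he, hpos⟩⟩
  have hnet : ∑ a ∈ A, b a ≤ 0 := by
    simp only [← hcons, sum_sub_distrib]
    linarith [sum_inflow_le_sum_outflow hf hA]
  have hdemand : b t ≤ ∑ a ∈ A, b a :=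
    single_le_sum (fun a ha => hsrc a (mem_filter.1 ha).2) htA
  linarith

end Flow

theorem eq_one_of_pos_of_le_mul {n : ℕ} {x D : ℝ} (hn : n ≤ 1) (hx : x ≤ n * D) (hpos : 0 < x) :
    n = 1 := by
  rcases Nat.le_one_iff_eq_zero_or_eq_one.1 hn with rfl | rfl
  · simp only [Nat.cast_zero, zero_mul] at hx; linarith
  · rfl

theorem sum_eq_card_filter_eq_one {ι : Type*} {S : Finset ι} {y : ι → ℕ}
    (hy : ∀ e ∈ S, y e ≤ 1) : ∑ e ∈ S, y e = #{e ∈ S | y e = 1} := by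
  rw [card_filter]
  exact sum_congr rfl fun e he => by have := hy e he; split_ifs <;> omega

theorem traceback_well_defined_general {V : Type} [DecidableEq V]
    (L : Finset (V × V)) (s : V) (T : Finset V) (hsT : s ∉ T)
    (d : V → ℝ) (hd : ∀ t ∈ T, 0 < d t)
    (y : V × V → ℕ) (f : V × V → ℝ)
    (hy01 : ∀ e, y e ≤ 1) (hf0 : ∀ e, 0 ≤ f e)
    (hfb : ∀ e, f e ≤ (y e : ℝ) * ∑ t ∈ T, d t)
    (hcons : ∀ i : V,
      ∑ e ∈ L.filter (fun e => e.2 = i), f e - ∑ e ∈ L.filter (fun e => e.1 = i), f e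
        = if i = s then -(∑ t ∈ T, d t) else if i ∈ T then d i else 0)
    (hpu : ∀ i : V,
      (i = s → ∑ e ∈ L.filter (fun e => e.2 = i), y e = 0)
      ∧ (i ∈ T → ∑ e ∈ L.filter (fun e => e.2 = i), y e = 1)
      ∧ (i ≠ s → ∑ e ∈ L.filter (fun e => e.2 = i), y e ≤ 1))
    (t₀ : V) (ht₀ : t₀ ∈ T) :
    (∀ i : V, i ≠ s →
      Relation.ReflTransGen (fun a b => (b, a) ∈ L ∧ 0 < f (b, a)) t₀ i →
      (L.filter fun e => e.2 = i ∧ y e = 1).card = 1)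
    ∧ ∃ p : List V, p.head? = some s ∧ p.getLast? = some t₀ ∧
        p.Chain' (fun a b => (a, b) ∈ L ∧ y (a, b) = 1) := by
  have hsel : ∀ e, 0 < f e → y e = 1 := fun e => eq_one_of_pos_of_le_mul (hy01 e) (hfb e)
  have hsupply : ∀ i ≠ s, 0 ≤ if i = s then -(∑ t ∈ T, d t) else if i ∈ T then d i else 0 :=
    fun i hi => by rw [if_neg hi]; split_ifs with h; exacts [(hd i h).le, le_rfl]
  have hdemand : 0 < if t₀ = s then -(∑ t ∈ T, d t) else if t₀ ∈ T then d t₀ else 0 := by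
    rw [if_neg (ne_of_mem_of_not_mem ht₀ hsT), if_pos ht₀]; exact hd t₀ ht₀
  refine ⟨fun i hi hreach => ?_, ?_⟩
  · obtain ⟨e₀, he₀, hfe₀⟩ := (sum_pos_iff_of_nonneg fun e _ => hf0 e).1 <|
      inflow_pos_of_reflTransGen hf0 hcons hdemand (hsupply i hi) hreach
    have hle := (hpu i).2.2 hi
    rw [sum_eq_card_filter_eq_one fun e _ => hy01 e, filter_filter] at hle
    have hge : 0 < #{e ∈ L | e.2 = i ∧ y e = 1} :=
      card_pos.2 ⟨e₀, mem_filter.2 ⟨(mem_filter.1 he₀).1, (mem_filter.1 he₀).2, hsel e₀ hfe₀⟩⟩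
    omega
  · obtain ⟨i, hreach, hneg⟩ := exists_reflTransGen_neg_of_pos hf0 hcons hdemand
    obtain rfl : i = s := by_contra fun hi => (hsupply i hi).not_gt hneg
    obtain ⟨l, hchain, hlast⟩ := List.exists_isChain_cons_of_relationReflTransGen hreach.swap
    refine ⟨i :: l, rfl, by rw [List.getLast?_eq_some_getLast (List.cons_ne_nil _ _), hlast], ?_⟩
    exact hchain.imp fun a b h => ⟨h.1, hsel _ h.2⟩

/-- In a feasible solution `(y, f)` of the relaxed origin-based model for origin `s`,
fix a destination `t₀ ∈ T` (its demand is positive).  Every node `i ≠ s` reachable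
backwards from `t₀` through positive-flow edges has exactly one incoming edge with
`y = 1`; consequently tracing back from `t₀` along `y`-selected incoming edges yields a
well-defined directed path from `s` to `t₀`. -/
theorem traceback_well_defined {V : Type} [DecidableEq V]
    (L : Finset (V × V)) (s : V) (T : Finset V) (hsT : s ∉ T) (hTne : T.Nonempty)
    (d : V → ℝ) (hd : ∀ t ∈ T, 0 < d t)
    (y : V × V → ℕ) (f : V × V → ℝ)
    (hy01 : ∀ e, y e ≤ 1) (hf0 : ∀ e, 0 ≤ f e)
    (hfb : ∀ e, f e ≤ (y e : ℝ) * ∑ t ∈ T, d t)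
    (hcons : ∀ i : V,
      ∑ e ∈ L.filter (fun e => e.2 = i), f e - ∑ e ∈ L.filter (fun e => e.1 = i), f e
        = if i = s then -(∑ t ∈ T, d t) else if i ∈ T then d i else 0)
    (hpu : ∀ i : V,
      (i = s → ∑ e ∈ L.filter (fun e => e.2 = i), y e = 0)
      ∧ (i ∈ T → ∑ e ∈ L.filter (fun e => e.2 = i), y e = 1)
      ∧ (i ≠ s → ∑ e ∈ L.filter (fun e => e.2 = i), y e ≤ 1))
    (t₀ : V) (ht₀ : t₀ ∈ T) :
    (∀ i : V, i ≠ s →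
      Relation.ReflTransGen (fun a b => (b, a) ∈ L ∧ 0 < f (b, a)) t₀ i →
      (L.filter fun e => e.2 = i ∧ y e = 1).card = 1)
    ∧ ∃ p : List V, p.head? = some s ∧ p.getLast? = some t₀ ∧
        p.Chain' (fun a b => (a, b) ∈ L ∧ y (a, b) = 1) :=
  traceback_well_defined_general L s T hsT d hd y f hy01 hf0 hfb hcons hpu t₀ ht₀
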